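/- arXiv:2212.14852 — 3 statements merged into one kernel-verified Lean document; each statement's English description precedes it below -/
import Mathlib

section
/- Let Θ ⊆ ℝ^p be a convex set and for each θ ∈ Θ let f_θ : 𝔛 → ℝ^{d_y} be such that θ ↦ f_θ(x) is differentiable on an open neighborhood of Θ for each x. Fix data points (X₁, y₁), …, (Xₙ, yₙ) with ‖yᵢ‖₂ ≤ 1/2 for all i ∈ [n] and ‖f_θ(Xᵢ)‖₂ ≤ 1/2 for all θ ∈ Θ and i ∈ [n]. Define the empirical risk L̂(θ) = (1/n) Σ_{i=1}^n ‖yᵢ − f_θ(Xᵢ)‖₂². Suppose θ̂ ∈ Θ is a stationary point of L̂ over Θ, i.e., ⟨∇_θ L̂(θ̂), θ − θ̂⟩ ≥ 0 for all θ ∈ Θ, and suppose θ* ∈ Θ minimizes L̂ over Θ. Then L̂(θ̂) − L̂(θ*) ≤ 2 · inf_{θ∈Θ} (1/n) Σ_{i=1}^n ‖f_{θ̂}(Xᵢ) + J_i(θ − θ̂) − f_{θ*}(Xᵢ)‖₂, where J_i ∈ ℝ^{d_y×p} denotes the Jacobian of the map θ ↦ f_θ(Xᵢ) evaluated at θ̂.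 -/
set_option maxHeartbeats 1000000


open scoped RealInnerProductSpace

/-- Optimization error bound at a stationary point of the empirical risk. -/
theorem optimization_error_stationary_point
    {p dy : ℕ} {𝔛 : Type*}
    (Θ : Set (EuclideanSpace ℝ (Fin p))) (hΘ : Convex ℝ Θ)
    (f : EuclideanSpace ℝ (Fin p) → 𝔛 → EuclideanSpace ℝ (Fin dy))
    -- differentiability of `θ ↦ f_θ(x)` on an open neighborhood of `Θ`
    (hdiff : ∃ U : Set (EuclideanSpace ℝ (Fin p)),
      IsOpen U ∧ Θ ⊆ U ∧ ∀ x : 𝔛, DifferentiableOn ℝ (fun θ => f θ x) U)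
    {n : ℕ} (hn : 0 < n)
    (X : Fin n → 𝔛) (y : Fin n → EuclideanSpace ℝ (Fin dy))
    (hy : ∀ i, ‖y i‖ ≤ 1 / 2)
    (hfb : ∀ θ ∈ Θ, ∀ i, ‖f θ (X i)‖ ≤ 1 / 2)
    -- the empirical risk
    (Lhat : EuclideanSpace ℝ (Fin p) → ℝ)
    (hLhat : Lhat = fun θ => (1 / (n : ℝ)) * ∑ i, ‖y i - f θ (X i)‖ ^ 2)
    -- `θ̂ ∈ Θ` is a stationary point of `L̂` over `Θ`
    (θhat : EuclideanSpace ℝ (Fin p)) (hθhat : θhat ∈ Θ)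
    (hstat : ∀ θ ∈ Θ, 0 ≤ ⟪gradient Lhat θhat, θ - θhat⟫)
    -- `θ*` minimizes `L̂` over `Θ`
    (θstar : EuclideanSpace ℝ (Fin p)) (hθstar : θstar ∈ Θ)
    (hmin : ∀ θ ∈ Θ, Lhat θstar ≤ Lhat θ) :
    Lhat θhat - Lhat θstar ≤
      2 * ⨅ θ : Θ, (1 / (n : ℝ)) *
        ∑ i, ‖f θhat (X i) + fderiv ℝ (fun θ' => f θ' (X i)) θhat ((θ : EuclideanSpace ℝ (Fin p)) - θhat)
              - f θstar (X i)‖ := by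
  obtain ⟨U, hUopen, hΘU, hUdiff⟩ := hdiff
  set J : Fin n → (EuclideanSpace ℝ (Fin p) →L[ℝ] EuclideanSpace ℝ (Fin dy)) :=
    fun i => fderiv ℝ (fun θ' => f θ' (X i)) θhat with hJ
  have hdiffAt : ∀ i, HasFDerivAt (fun θ' => f θ' (X i)) (J i) θhat := fun i =>
    ((hUdiff (X i)).differentiableAt (hUopen.mem_nhds (hΘU hθhat))).hasFDerivAt
  -- derivative of the empirical risk at θhat
  have hL' : HasFDerivAt Lhat
      ((1 / (n : ℝ)) • ∑ i, (2 • ((innerSL ℝ (y i - f θhat (X i))).comp (-(J i))))) θhat := by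
    rw [hLhat]
    exact HasFDerivAt.const_mul
      (HasFDerivAt.fun_sum fun i _ => ((hdiffAt i).const_sub (y i)).norm_sq) _
  have hgradv : ∀ v, ⟪gradient Lhat θhat, v⟫
      = (1 / (n : ℝ)) * ∑ i, 2 * ⟪y i - f θhat (X i), -(J i v)⟫ := by
    intro v
    rw [gradient, hL'.fderiv, InnerProductSpace.toDual_symm_apply]
    simp only [ContinuousLinearMap.smul_apply, ContinuousLinearMap.coe_sum',
      Finset.sum_apply, ContinuousLinearMap.coe_comp', Function.comp_apply,
      ContinuousLinearMap.neg_apply, innerSL_apply_apply, smul_eq_mul, nsmul_eq_mul,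
      Nat.cast_ofNat]
  have hnpos : (0 : ℝ) < (n : ℝ) := by exact_mod_cast hn
  -- main bound for each θ ∈ Θ
  have key : ∀ θ ∈ Θ, Lhat θhat - Lhat θstar
      ≤ 2 * ((1 / (n : ℝ)) * ∑ i, ‖f θhat (X i) + J i (θ - θhat) - f θstar (X i)‖) := by
    intro θ hθ
    set v := θ - θhat with hv
    set g : Fin n → EuclideanSpace ℝ (Fin dy) :=
      fun i => f θhat (X i) + J i v - f θstar (X i) with hg
    -- stationarity gives nonpositivity of the linear term
    have hstat' : ∑ i, ⟪y i - f θhat (X i), J i v⟫ ≤ 0 := by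
      have h0 := hstat θ hθ
      rw [hgradv v] at h0
      have h1 : 0 ≤ ∑ i, 2 * ⟪y i - f θhat (X i), -(J i v)⟫ :=
        le_of_mul_le_mul_left (by simpa using h0) (by positivity : (0:ℝ) < 1 / (n:ℝ))
      have h2 : ∑ i, (2:ℝ) * ⟪y i - f θhat (X i), -(J i v)⟫
          = -2 * ∑ i, ⟪y i - f θhat (X i), J i v⟫ := by
        rw [Finset.mul_sum]
        apply Finset.sum_congr rfl
        intro i _
        rw [inner_neg_right]
        ring
      linarith [h2 ▸ h1]
    -- pointwise bound
    have hbound : ∀ i, ‖y i - f θhat (X i)‖ ^ 2 - ‖y i - f θstar (X i)‖ ^ 2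
        ≤ 2 * ⟪y i - f θhat (X i), J i v⟫ + 2 * ‖g i‖ := by
      intro i
      have hid : y i - f θstar (X i) = (y i - f θhat (X i)) - (J i v - g i) := by
        simp only [hg]
        abel
      have hsq : ‖y i - f θstar (X i)‖ ^ 2
          = ‖y i - f θhat (X i)‖ ^ 2 - 2 * ⟪y i - f θhat (X i), J i v - g i⟫
            + ‖J i v - g i‖ ^ 2 := by
        rw [hid, norm_sub_sq_real]
      have hin : ⟪y i - f θhat (X i), J i v - g i⟫
          = ⟪y i - f θhat (X i), J i v⟫ - ⟪y i - f θhat (X i), g i⟫ :=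
        inner_sub_right _ _ _
      have habs := abs_real_inner_le_norm (y i - f θhat (X i)) (g i)
      have hynorm : ‖y i - f θhat (X i)‖ ≤ 1 := by
        calc ‖y i - f θhat (X i)‖ ≤ ‖y i‖ + ‖f θhat (X i)‖ := norm_sub_le _ _
          _ ≤ 1 / 2 + 1 / 2 := add_le_add (hy i) (hfb θhat hθhat i)
          _ = 1 := by norm_num
      have hng : (0:ℝ) ≤ ‖g i‖ := norm_nonneg _
      have h5 : ‖y i - f θhat (X i)‖ * ‖g i‖ ≤ 1 * ‖g i‖ :=
        mul_le_mul_of_nonneg_right hynorm hng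
      have habs' := abs_le.mp habs
      nlinarith [sq_nonneg ‖J i v - g i‖]
    have hsum : ∑ i, (‖y i - f θhat (X i)‖ ^ 2 - ‖y i - f θstar (X i)‖ ^ 2)
        ≤ 2 * ∑ i, ‖g i‖ := by
      calc ∑ i, (‖y i - f θhat (X i)‖ ^ 2 - ‖y i - f θstar (X i)‖ ^ 2)
          ≤ ∑ i, (2 * ⟪y i - f θhat (X i), J i v⟫ + 2 * ‖g i‖) :=
            Finset.sum_le_sum fun i _ => hbound i
        _ = 2 * ∑ i, ⟪y i - f θhat (X i), J i v⟫ + 2 * ∑ i, ‖g i‖ := by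
            rw [Finset.sum_add_distrib, Finset.mul_sum, Finset.mul_sum]
        _ ≤ 2 * ∑ i, ‖g i‖ := by linarith
    have hLdiff : Lhat θhat - Lhat θstar
        = (1 / (n : ℝ)) * ∑ i, (‖y i - f θhat (X i)‖ ^ 2 - ‖y i - f θstar (X i)‖ ^ 2) := by
      rw [hLhat]
      simp only [Finset.sum_sub_distrib]
      ring
    have hmul := mul_le_mul_of_nonneg_left hsum (by positivity : (0:ℝ) ≤ 1 / (n : ℝ))
    rw [hLdiff]
    calc (1 / (n : ℝ)) * ∑ i, (‖y i - f θhat (X i)‖ ^ 2 - ‖y i - f θstar (X i)‖ ^ 2)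
        ≤ (1 / (n : ℝ)) * (2 * ∑ i, ‖g i‖) := hmul
      _ = 2 * ((1 / (n : ℝ)) * ∑ i, ‖g i‖) := by ring
  -- take the infimum
  have hne : Nonempty Θ := ⟨⟨θhat, hθhat⟩⟩
  have hinf : (Lhat θhat - Lhat θstar) / 2
      ≤ ⨅ θ : Θ, (1 / (n : ℝ)) *
        ∑ i, ‖f θhat (X i) + J i ((θ : EuclideanSpace ℝ (Fin p)) - θhat) - f θstar (X i)‖ :=
    le_ciInf fun θ => by linarith [key θ θ.2]
  linarith
end

section
/- Fix γ > 0 and let 𝔎(a, b) = exp(aᵀb/γ) be the exponential kernel. Let q, k¹, …, k^L ∈ S^{d_p−1} and v¹, …, v^L ∈ S^{d−1} with d ≥ 2, and set K = (k¹, …, k^L)ᵀ ∈ ℝ^{L×d_p} and V = (v¹, …, v^L)ᵀ ∈ ℝ^{L×d}. For ι > 0 define the kernel conditional density estimate P̂(v | q) = ι · (Σ_{ℓ=1}^L 𝔎(k^ℓ, q) · 𝔎(v^ℓ, v)) / (Σ_{ℓ=1}^L 𝔎(k^ℓ, q)) for v ∈ S^{d−1}. Then ∫_{S^{d−1}} v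 · P̂(v | q) dσ_{d−1}(v) = ι · C₁ · Vᵀ softmax(Kq/γ), where C₁ = ∫_{S^{d−1}} (aᵀb) exp(aᵀb/γ) dσ_{d−1}(a) for any b ∈ S^{d−1} (this value is independent of b). In other words, the mean of the kernel conditional density estimator equals a positive constant multiple of the softmax attention Vᵀ softmax(Kq/γ). -/
open MeasureTheory Metric Set
open scoped Pointwise
open scoped RealInnerProductSpace

/-- The surface (spherical) measure `σ_{d−1}` on the unit sphere of `ℝ^d`. -/
noncomputable def sphereMeasure (d : ℕ) :
    Measure (sphere (0 : EuclideanSpace ℝ (Fin d)) 1) :=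
  (volume : Measure (EuclideanSpace ℝ (Fin d))).toSphere

/-- The softmax of a vector `u ∈ ℝ^L`. -/
noncomputable def softmax {L : ℕ} (u : Fin L → ℝ) : Fin L → ℝ :=
  fun ℓ => Real.exp (u ℓ) / ∑ ℓ', Real.exp (u ℓ')

section Aux

variable {d : ℕ}

lemma sphere_map_mem (T : EuclideanSpace ℝ (Fin d) ≃ₗᵢ[ℝ] EuclideanSpace ℝ (Fin d))
    (a : sphere (0 : EuclideanSpace ℝ (Fin d)) 1) :
    T a ∈ sphere (0 : EuclideanSpace ℝ (Fin d)) 1 := by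
  rw [mem_sphere_zero_iff_norm, T.norm_map]
  exact mem_sphere_zero_iff_norm.mp a.2

/-- A linear isometry equivalence restricts to a measurable equivalence of the unit sphere. -/
noncomputable def sphereEquiv (T : EuclideanSpace ℝ (Fin d) ≃ₗᵢ[ℝ] EuclideanSpace ℝ (Fin d)) :
    sphere (0 : EuclideanSpace ℝ (Fin d)) 1 ≃ᵐ sphere (0 : EuclideanSpace ℝ (Fin d)) 1 where
  toFun a := ⟨T a, sphere_map_mem T a⟩
  invFun a := ⟨T.symm a, sphere_map_mem T.symm a⟩
  left_inv a := by ext; simp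
  right_inv a := by ext; simp
  measurable_toFun := ((T.continuous.comp continuous_subtype_val).subtype_mk _).measurable
  measurable_invFun := ((T.symm.continuous.comp continuous_subtype_val).subtype_mk _).measurable

lemma sphereEquiv_measurePreserving
    (T : EuclideanSpace ℝ (Fin d) ≃ₗᵢ[ℝ] EuclideanSpace ℝ (Fin d)) :
    MeasurePreserving (sphereEquiv T) (sphereMeasure d) (sphereMeasure d) := by
  refine ⟨(sphereEquiv T).measurable, ?_⟩
  refine Measure.ext fun s hs => ?_
  rw [Measure.map_apply (sphereEquiv T).measurable hs]
  rw [sphereMeasure, Measure.toSphere_apply' _ ((sphereEquiv T).measurable hs),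
    Measure.toSphere_apply' _ hs]
  congr 1
  have him : (Subtype.val '' (sphereEquiv T ⁻¹' s)) = ⇑T ⁻¹' (Subtype.val '' s) := by
    ext x
    constructor
    · rintro ⟨a, ha, rfl⟩
      exact ⟨_, ha, rfl⟩
    · rintro ⟨b, hb, hbx⟩
      have hx : x ∈ sphere (0 : EuclideanSpace ℝ (Fin d)) 1 := by
        have : ‖(b : EuclideanSpace ℝ (Fin d))‖ = 1 := mem_sphere_zero_iff_norm.mp b.2
        rw [mem_sphere_zero_iff_norm, ← T.norm_map x, ← hbx]
        exact this
      refine ⟨⟨x, hx⟩, ?_, rfl⟩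
      have : sphereEquiv T ⟨x, hx⟩ = b := by
        apply Subtype.ext
        simpa [sphereEquiv] using hbx.symm
      show sphereEquiv T ⟨x, hx⟩ ∈ s
      rw [this]; exact hb
  rw [him]
  have hpre : ⇑T ⁻¹' (Subtype.val '' s) = ⇑T.symm '' (Subtype.val '' s) := by
    ext x
    simp only [mem_preimage, mem_image]
    constructor
    · intro h
      exact ⟨T x, h, by simp⟩
    · rintro ⟨y, hy, rfl⟩
      simpa using hy
  rw [hpre]
  have hsmul : Ioo (0:ℝ) 1 • (⇑T.symm '' (Subtype.val '' s))
      = ⇑T.symm '' (Ioo (0:ℝ) 1 • (Subtype.val '' s)) := by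
    rw [← Set.image2_smul, Set.image2_image_right, ← Set.image2_smul, Set.image_image2]
    refine Set.image2_congr fun r _ y _ => ?_
    exact (map_smul T.symm.toLinearEquiv r y).symm
  rw [hsmul]
  have h1 : ⇑T.symm '' (Ioo (0:ℝ) 1 • (Subtype.val '' s)) = ⇑T ⁻¹' (Ioo (0:ℝ) 1 • (Subtype.val '' s)) := by
    ext x
    simp only [mem_image, mem_preimage]
    constructor
    · rintro ⟨y, hy, rfl⟩; simpa using hy
    · intro h; exact ⟨T x, h, by simp⟩
  rw [h1]
  have h2 := MeasurableEquiv.map_apply T.toMeasurableEquiv (μ := volume)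
    (Ioo (0:ℝ) 1 • (Subtype.val '' s))
  rw [LinearIsometryEquiv.coe_toMeasurableEquiv, T.measurePreserving.map_eq] at h2
  exact h2.symm

lemma sphere_continuous_integrable (f : sphere (0 : EuclideanSpace ℝ (Fin d)) 1 → ℝ)
    (hf : Continuous f) : Integrable f (sphereMeasure d) := by
  haveI : IsFiniteMeasure (sphereMeasure d) := by unfold sphereMeasure; infer_instance
  apply hf.integrable_of_hasCompactSupport
  exact IsCompact.of_isClosed_subset isCompact_univ (isClosed_tsupport f) (Set.subset_univ _)

lemma sphere_continuous_integrable' (f : sphere (0 : EuclideanSpace ℝ (Fin d)) 1 →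
      EuclideanSpace ℝ (Fin d))
    (hf : Continuous f) : Integrable f (sphereMeasure d) := by
  haveI : IsFiniteMeasure (sphereMeasure d) := by unfold sphereMeasure; infer_instance
  apply hf.integrable_of_hasCompactSupport
  exact IsCompact.of_isClosed_subset isCompact_univ (isClosed_tsupport f) (Set.subset_univ _)

lemma integral_inner_mul_exp_eq_zero (γ : ℝ) (b w : EuclideanSpace ℝ (Fin d))
    (hbw : ⟪w, b⟫ = 0) :
    ∫ a : sphere (0 : EuclideanSpace ℝ (Fin d)) 1,
      ⟪w, (a : EuclideanSpace ℝ (Fin d))⟫ *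
        Real.exp (⟪b, (a : EuclideanSpace ℝ (Fin d))⟫ / γ) ∂(sphereMeasure d) = 0 := by
  rcases eq_or_ne w 0 with rfl | hw
  · simp
  set T : EuclideanSpace ℝ (Fin d) ≃ₗᵢ[ℝ] EuclideanSpace ℝ (Fin d) := Submodule.reflection ((ℝ ∙ w)ᗮ)
  have hTb : T b = b :=
    Submodule.reflection_mem_subspace_eq_self <|
      (Submodule.mem_orthogonal_singleton_iff_inner_left).2 (by rw [real_inner_comm]; exact hbw)
  have hTw : T w = -w :=
    Submodule.reflection_mem_subspace_orthogonalComplement_eq_neg <|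
      Submodule.le_orthogonal_orthogonal _ (Submodule.mem_span_singleton_self w)
  have hTsymm : T.symm = T := Submodule.reflection_symm
  set g : sphere (0 : EuclideanSpace ℝ (Fin d)) 1 → ℝ := fun a =>
    ⟪w, (a : EuclideanSpace ℝ (Fin d))⟫ * Real.exp (⟪b, (a : EuclideanSpace ℝ (Fin d))⟫ / γ)
  have hint : ∫ a, g (sphereEquiv T a) ∂(sphereMeasure d) = ∫ a, g a ∂(sphereMeasure d) :=
    (sphereEquiv_measurePreserving T).integral_comp
      (sphereEquiv T).measurableEmbedding g
  have hg : ∀ a, g (sphereEquiv T a) = - g a := by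
    intro a
    have h1 : ⟪w, T (a : EuclideanSpace ℝ (Fin d))⟫ = -⟪w, (a : EuclideanSpace ℝ (Fin d))⟫ := by
      rw [real_inner_comm]
      conv_lhs => rw [show w = T (T.symm w) by simp, T.inner_map_map, hTsymm, hTw]
      rw [inner_neg_right, real_inner_comm]
    have h2 : ⟪b, T (a : EuclideanSpace ℝ (Fin d))⟫ = ⟪b, (a : EuclideanSpace ℝ (Fin d))⟫ := by
      rw [real_inner_comm]
      conv_lhs => rw [show b = T (T.symm b) by simp, T.inner_map_map, hTsymm, hTb]
      rw [real_inner_comm]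
    show ⟪w, T (a : EuclideanSpace ℝ (Fin d))⟫ * Real.exp (⟪b, T (a : EuclideanSpace ℝ (Fin d))⟫ / γ) = _
    rw [h1, h2]
    ring
  rw [integral_congr_ae (Filter.Eventually.of_forall hg), integral_neg] at hint
  linarith

lemma integral_exp_smul (γ : ℝ) (b : EuclideanSpace ℝ (Fin d)) (hb : ‖b‖ = 1) :
    ∫ a : sphere (0 : EuclideanSpace ℝ (Fin d)) 1,
        Real.exp (⟪b, (a : EuclideanSpace ℝ (Fin d))⟫ / γ) • (a : EuclideanSpace ℝ (Fin d))
      ∂(sphereMeasure d)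
    = (∫ a : sphere (0 : EuclideanSpace ℝ (Fin d)) 1,
        ⟪(a : EuclideanSpace ℝ (Fin d)), b⟫ *
          Real.exp (⟪(a : EuclideanSpace ℝ (Fin d)), b⟫ / γ) ∂(sphereMeasure d)) • b := by
  have hexp : Continuous fun a : sphere (0 : EuclideanSpace ℝ (Fin d)) 1 =>
      Real.exp (⟪b, (a : EuclideanSpace ℝ (Fin d))⟫ / γ) :=
    ((Continuous.inner continuous_const continuous_subtype_val).div_const γ).rexp
  have hF : Integrable (fun a : sphere (0 : EuclideanSpace ℝ (Fin d)) 1 =>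
      Real.exp (⟪b, (a : EuclideanSpace ℝ (Fin d))⟫ / γ) • (a : EuclideanSpace ℝ (Fin d)))
      (sphereMeasure d) :=
    sphere_continuous_integrable' _ (hexp.smul continuous_subtype_val)
  apply ext_inner_right ℝ
  intro w
  set C : ℝ := ∫ a : sphere (0 : EuclideanSpace ℝ (Fin d)) 1,
        ⟪(a : EuclideanSpace ℝ (Fin d)), b⟫ *
          Real.exp (⟪(a : EuclideanSpace ℝ (Fin d)), b⟫ / γ) ∂(sphereMeasure d) with hC
  set c : ℝ := ⟪b, w⟫ with hc
  set w' : EuclideanSpace ℝ (Fin d) := w - c • b with hw'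
  have hw'b : ⟪w', b⟫ = 0 := by
    rw [hw', inner_sub_left, real_inner_smul_left, real_inner_self_eq_norm_sq, hb,
      real_inner_comm]
    ring
  -- left side
  rw [real_inner_comm, ← integral_inner hF w]
  have hre : (fun a : sphere (0 : EuclideanSpace ℝ (Fin d)) 1 =>
      ⟪w, Real.exp (⟪b, (a : EuclideanSpace ℝ (Fin d))⟫ / γ) • (a : EuclideanSpace ℝ (Fin d))⟫)
      = fun a : sphere (0 : EuclideanSpace ℝ (Fin d)) 1 =>
        c * (⟪(a : EuclideanSpace ℝ (Fin d)), b⟫ *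
          Real.exp (⟪(a : EuclideanSpace ℝ (Fin d)), b⟫ / γ))
        + ⟪w', (a : EuclideanSpace ℝ (Fin d))⟫ *
            Real.exp (⟪b, (a : EuclideanSpace ℝ (Fin d))⟫ / γ) := by
    funext a
    rw [real_inner_smul_right]
    have hsplit : ⟪w, (a : EuclideanSpace ℝ (Fin d))⟫
        = c * ⟪b, (a : EuclideanSpace ℝ (Fin d))⟫ + ⟪w', (a : EuclideanSpace ℝ (Fin d))⟫ := by
      rw [hw', inner_sub_left, real_inner_smul_left]
      ring
    rw [hsplit, real_inner_comm b (a : EuclideanSpace ℝ (Fin d))]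
    ring
  rw [hre, integral_add, integral_const_mul]
  · have hzero : ∫ a : sphere (0 : EuclideanSpace ℝ (Fin d)) 1,
        ⟪w', (a : EuclideanSpace ℝ (Fin d))⟫ *
          Real.exp (⟪b, (a : EuclideanSpace ℝ (Fin d))⟫ / γ) ∂(sphereMeasure d) = 0 := by
      exact integral_inner_mul_exp_eq_zero γ b w' hw'b
    rw [hzero, ← hC, real_inner_smul_left, hc]
    ring
  · refine (sphere_continuous_integrable _ ?_).const_mul c
    exact (Continuous.inner continuous_subtype_val continuous_const).mul
      (((Continuous.inner continuous_subtype_val continuous_const).div_const γ).rexp)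
  · refine sphere_continuous_integrable _ ?_
    exact (Continuous.inner continuous_const continuous_subtype_val).mul hexp

end Aux

/-- The mean of the kernel conditional density estimator (with exponential
kernel `𝔎(a,b) = exp(aᵀb/γ)`) equals `ι · C₁` times the softmax attention `Vᵀ softmax(Kq/γ)`. -/
theorem kernel_density_mean_eq_softmax_attention
    {d dp L : ℕ} (hd : 2 ≤ d) (hL : 0 < L)
    (γ ι : ℝ) (hγ : 0 < γ) (hι : 0 < ι)
    (q : EuclideanSpace ℝ (Fin dp)) (hq : q ∈ sphere (0 : EuclideanSpace ℝ (Fin dp)) 1)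
    (k : Fin L → EuclideanSpace ℝ (Fin dp))
    (hk : ∀ ℓ, k ℓ ∈ sphere (0 : EuclideanSpace ℝ (Fin dp)) 1)
    (v : Fin L → EuclideanSpace ℝ (Fin d))
    (hv : ∀ ℓ, v ℓ ∈ sphere (0 : EuclideanSpace ℝ (Fin d)) 1)
    (C₁ : ℝ)
    (hC₁ : ∀ b ∈ sphere (0 : EuclideanSpace ℝ (Fin d)) 1,
      C₁ = ∫ a : sphere (0 : EuclideanSpace ℝ (Fin d)) 1,
        ⟪(a : EuclideanSpace ℝ (Fin d)), b⟫ *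
          Real.exp (⟪(a : EuclideanSpace ℝ (Fin d)), b⟫ / γ) ∂(sphereMeasure d)) :
    (∫ a : sphere (0 : EuclideanSpace ℝ (Fin d)) 1,
        (ι * (∑ ℓ, Real.exp (⟪k ℓ, q⟫ / γ) *
                Real.exp (⟪v ℓ, (a : EuclideanSpace ℝ (Fin d))⟫ / γ)) /
            ∑ ℓ, Real.exp (⟪k ℓ, q⟫ / γ)) • (a : EuclideanSpace ℝ (Fin d))
      ∂(sphereMeasure d))
      = (ι * C₁) • ∑ ℓ, softmax (fun ℓ' => ⟪k ℓ', q⟫ / γ) ℓ • v ℓ := by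
  haveI : Nonempty (Fin L) := ⟨⟨0, hL⟩⟩
  set D : ℝ := ∑ ℓ, Real.exp (⟪k ℓ, q⟫ / γ) with hD
  have hDpos : 0 < D := Finset.sum_pos (fun _ _ => Real.exp_pos _) Finset.univ_nonempty
  have hfun : (fun a : sphere (0 : EuclideanSpace ℝ (Fin d)) 1 =>
      (ι * (∑ ℓ, Real.exp (⟪k ℓ, q⟫ / γ) *
        Real.exp (⟪v ℓ, (a : EuclideanSpace ℝ (Fin d))⟫ / γ)) / D) • (a : EuclideanSpace ℝ (Fin d)))
      = fun a : sphere (0 : EuclideanSpace ℝ (Fin d)) 1 =>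
        ∑ ℓ, ((ι * Real.exp (⟪k ℓ, q⟫ / γ) / D) *
          Real.exp (⟪v ℓ, (a : EuclideanSpace ℝ (Fin d))⟫ / γ)) • (a : EuclideanSpace ℝ (Fin d)) := by
    funext a
    rw [← Finset.sum_smul]
    congr 1
    rw [Finset.mul_sum, Finset.sum_div]
    exact Finset.sum_congr rfl fun ℓ _ => by ring
  rw [hfun, integral_finset_sum]
  · have hterm : ∀ ℓ, (∫ a : sphere (0 : EuclideanSpace ℝ (Fin d)) 1,
        ((ι * Real.exp (⟪k ℓ, q⟫ / γ) / D) *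
          Real.exp (⟪v ℓ, (a : EuclideanSpace ℝ (Fin d))⟫ / γ)) • (a : EuclideanSpace ℝ (Fin d))
        ∂(sphereMeasure d))
        = (ι * Real.exp (⟪k ℓ, q⟫ / γ) / D) • (C₁ • v ℓ) := by
      intro ℓ
      have hsm : (fun a : sphere (0 : EuclideanSpace ℝ (Fin d)) 1 =>
          ((ι * Real.exp (⟪k ℓ, q⟫ / γ) / D) *
            Real.exp (⟪v ℓ, (a : EuclideanSpace ℝ (Fin d))⟫ / γ)) • (a : EuclideanSpace ℝ (Fin d)))
          = fun a : sphere (0 : EuclideanSpace ℝ (Fin d)) 1 =>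
            (ι * Real.exp (⟪k ℓ, q⟫ / γ) / D) •
              (Real.exp (⟪v ℓ, (a : EuclideanSpace ℝ (Fin d))⟫ / γ) • (a : EuclideanSpace ℝ (Fin d))) := by
        funext a; rw [smul_smul]
      rw [hsm, integral_smul, integral_exp_smul γ (v ℓ) (mem_sphere_zero_iff_norm.mp (hv ℓ)),
        ← hC₁ (v ℓ) (hv ℓ)]
    rw [Finset.sum_congr rfl fun ℓ _ => hterm ℓ, Finset.smul_sum]
    refine Finset.sum_congr rfl fun ℓ _ => ?_
    rw [smul_smul, smul_smul]
    congr 1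
    show ι * Real.exp (⟪k ℓ, q⟫ / γ) / D * C₁
      = ι * C₁ * (Real.exp (⟪k ℓ, q⟫ / γ) / ∑ ℓ', Real.exp (⟪k ℓ', q⟫ / γ))
    rw [← hD]
    ring
  · intro ℓ _
    refine sphere_continuous_integrable' _ ?_
    exact (Continuous.mul continuous_const
      (((Continuous.inner continuous_const continuous_subtype_val).div_const γ).rexp)).smul
      continuous_subtype_val
end

section
/- Let r, s > 1 with 1/r + 1/s = 1, and let σ > 0 satisfy σ² ≥ (2d_p)^{1/s}. For q ∈ ℝ^{d_p} and K = (k¹, …, k^L)ᵀ ∈ ℝ^{L×d_p} define the softmax-normalized Gaussian RBF similarity vector p(q, K) ∈ ℝ^L by p(q, K)_ℓ = exp(−‖q − k^ℓ‖₂²/(2σ²)) / Σ_{ℓ'=1}^L exp(−‖q − k^{ℓ'}‖₂²/(2σ²)). Then for all q, q̂ ∈ ℝ^{d_p} and K, K̂ ∈ ℝ^{L×d_p}: (a) ‖p(q, K) − p(q, K̂)‖₁ ≤ (‖q‖_r + max{‖Kᵀ‖_{r,∞}, ‖K̂ᵀ‖_{r,∞}}) · ‖Kᵀ − K̂ᵀ‖_{r,∞},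 and (b) ‖p(q, K) − p(q̂, K)‖₁ ≤ (max{‖q‖_r, ‖q̂‖_r} + ‖Kᵀ‖_{r,∞}) · ‖q − q̂‖_r. -/
open Matrix

/-- The vector `ℓ_r`-norm on `Fin m → ℝ`. -/
noncomputable def lrNorm {m : ℕ} (r : ℝ) (v : Fin m → ℝ) : ℝ :=
  (∑ i, |v i| ^ r) ^ (1 / r)

/-- The matrix `(r,∞)`-norm: maximum of the `ℓ_r`-norms of the columns. -/
noncomputable def matNormRInf {m n : ℕ} (r : ℝ) (M : Matrix (Fin m) (Fin n) ℝ) : ℝ :=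
  ⨆ j, lrNorm r (fun i => M i j)

/-- The Gaussian RBF kernel `exp(−‖q−k‖₂²/(2σ²))`. -/
noncomputable def rbf {dp : ℕ} (σ : ℝ) (q k : Fin dp → ℝ) : ℝ :=
  Real.exp (-(∑ i, (q i - k i) ^ 2) / (2 * σ ^ 2))

/-- The softmax-normalized Gaussian RBF similarity vector `p(q, K) ∈ ℝ^L`, where the rows of
`K` are the keys. -/
noncomputable def smVec {L dp : ℕ} (σ : ℝ) (q : Fin dp → ℝ)
    (K : Matrix (Fin L) (Fin dp) ℝ) : Fin L → ℝ :=
  fun ℓ => rbf σ q (K ℓ) / ∑ ℓ', rbf σ q (K ℓ')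



lemma lrNorm_nonneg {m : ℕ} (r : ℝ) (v : Fin m → ℝ) : 0 ≤ lrNorm r v :=
  Real.rpow_nonneg (Finset.sum_nonneg fun i _ => Real.rpow_nonneg (abs_nonneg _) r) _

lemma abs_le_lrNorm {m : ℕ} {r : ℝ} (hr : 0 < r) (v : Fin m → ℝ) (i : Fin m) :
    |v i| ≤ lrNorm r v := by
  have h1 : |v i| ^ r ≤ ∑ j, |v j| ^ r :=
    Finset.single_le_sum (fun j _ => Real.rpow_nonneg (abs_nonneg _) r) (Finset.mem_univ i)
  calc |v i| = (|v i| ^ r) ^ (1 / r) := by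
        rw [← Real.rpow_mul (abs_nonneg _), mul_one_div, div_self hr.ne', Real.rpow_one]
    _ ≤ lrNorm r v := Real.rpow_le_rpow (Real.rpow_nonneg (abs_nonneg _) _) h1 (by positivity)


lemma lrNorm_add_le {m : ℕ} {r : ℝ} (hr : 1 ≤ r) (a b : Fin m → ℝ) :
    lrNorm r (fun i => a i + b i) ≤ lrNorm r a + lrNorm r b :=
  Real.Lp_add_le Finset.univ a b hr

lemma lrNorm_neg {m : ℕ} (r : ℝ) (v : Fin m → ℝ) :
    lrNorm r (fun i => -(v i)) = lrNorm r v := by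
  simp [lrNorm]

lemma lrNorm_sub_le {m : ℕ} {r : ℝ} (hr : 1 ≤ r) (a b : Fin m → ℝ) :
    lrNorm r (fun i => a i - b i) ≤ lrNorm r a + lrNorm r b := by
  have := lrNorm_add_le hr a (fun i => -(b i))
  simpa [sub_eq_add_neg, lrNorm_neg] using this

lemma lrNorm_s_le {m : ℕ} {r s : ℝ} (hr : 0 < r) (hs : 0 < s) (v : Fin m → ℝ) :
    lrNorm s v ≤ (m : ℝ) ^ (1 / s) * lrNorm r v := by
  have h1 : ∀ i : Fin m, |v i| ^ s ≤ (lrNorm r v) ^ s := fun i =>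
    Real.rpow_le_rpow (abs_nonneg _) (abs_le_lrNorm hr v i) hs.le
  have h2 : ∑ i, |v i| ^ s ≤ (m : ℝ) * (lrNorm r v) ^ s := by
    calc ∑ i, |v i| ^ s ≤ ∑ _i : Fin m, (lrNorm r v) ^ s := Finset.sum_le_sum fun i _ => h1 i
      _ = (m : ℝ) * (lrNorm r v) ^ s := by
          rw [Finset.sum_const, Finset.card_univ, Fintype.card_fin, nsmul_eq_mul]
  calc lrNorm s v ≤ ((m : ℝ) * (lrNorm r v) ^ s) ^ (1 / s) :=
        Real.rpow_le_rpow (Finset.sum_nonneg fun i _ => Real.rpow_nonneg (abs_nonneg _) _) h2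
          (by positivity)
    _ = (m : ℝ) ^ (1 / s) * lrNorm r v := by
        rw [Real.mul_rpow (by positivity) (Real.rpow_nonneg (lrNorm_nonneg r v) _),
          ← Real.rpow_mul (lrNorm_nonneg r v), mul_one_div, div_self hs.ne', Real.rpow_one]

lemma abs_sum_mul_le {m : ℕ} {p q : ℝ} (hpq : Real.HolderConjugate p q) (f g : Fin m → ℝ) :
    |∑ i, f i * g i| ≤ lrNorm p f * lrNorm q g := by
  calc |∑ i, f i * g i| ≤ ∑ i, |f i * g i| := Finset.abs_sum_le_sum_abs _ _
    _ = ∑ i, |f i| * |g i| := by simp [abs_mul]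
    _ ≤ lrNorm p f * lrNorm q g := by
        have := Real.inner_le_Lp_mul_Lq Finset.univ (fun i => |f i|) (fun i => |g i|) hpq
        simpa [lrNorm, abs_abs] using this


lemma weighted_abs_dev_le {L : ℕ} (p v : Fin L → ℝ) {C : ℝ} (hC0 : 0 ≤ C)
    (hp0 : ∀ ℓ, 0 ≤ p ℓ) (hp1 : ∑ ℓ, p ℓ = 1) (hv : ∀ ℓ, |v ℓ| ≤ C) :
    ∑ ℓ, p ℓ * |v ℓ - ∑ j, p j * v j| ≤ C := by
  set m := ∑ j, p j * v j with hm
  have hmC : |m| ≤ C := by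
    calc |m| ≤ ∑ j, |p j * v j| := Finset.abs_sum_le_sum_abs _ _
      _ ≤ ∑ j, p j * C := Finset.sum_le_sum fun j _ => by
          rw [abs_mul, abs_of_nonneg (hp0 j)]
          exact mul_le_mul_of_nonneg_left (hv j) (hp0 j)
      _ = C := by rw [← Finset.sum_mul, hp1, one_mul]
  obtain ⟨hmC1, hmC2⟩ := abs_le.1 hmC
  set T := Finset.univ.filter (fun ℓ => m ≤ v ℓ) with hT
  set T' := Finset.univ.filter (fun ℓ => ¬ m ≤ v ℓ) with hT'
  set a := ∑ ℓ ∈ T, p ℓ with ha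
  set A := ∑ ℓ ∈ T, p ℓ * (v ℓ - m) with hA
  set B := ∑ ℓ ∈ T', p ℓ * (m - v ℓ) with hB
  have hsplit : ∑ ℓ, p ℓ * |v ℓ - m| = A + B := by
    rw [hA, hB, ← Finset.sum_filter_add_sum_filter_not Finset.univ (fun ℓ => m ≤ v ℓ)
      (fun ℓ => p ℓ * |v ℓ - m|)]
    congr 1
    · exact Finset.sum_congr rfl fun ℓ hℓ => by
        rw [abs_of_nonneg (sub_nonneg.2 (Finset.mem_filter.1 hℓ).2)]
    · exact Finset.sum_congr rfl fun ℓ hℓ => by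
        have := (Finset.mem_filter.1 hℓ).2
        rw [abs_of_nonpos (by push_neg at this; linarith), neg_sub]
  have hAB : A = B := by
    have h1 : A - B = ∑ ℓ, p ℓ * (v ℓ - m) := by
      rw [hA, hB, ← Finset.sum_filter_add_sum_filter_not Finset.univ (fun ℓ => m ≤ v ℓ)
        (fun ℓ => p ℓ * (v ℓ - m))]
      have : ∑ ℓ ∈ T', p ℓ * (m - v ℓ) = - ∑ ℓ ∈ T', p ℓ * (v ℓ - m) := by
        rw [← Finset.sum_neg_distrib]
        exact Finset.sum_congr rfl fun ℓ _ => by ring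
      rw [this]; ring
    have h2 : ∑ ℓ, p ℓ * (v ℓ - m) = 0 := by
      simp only [mul_sub, Finset.sum_sub_distrib, ← Finset.sum_mul, hp1, one_mul, ← hm]
      ring
    linarith [h1, h2]
  have ha0 : 0 ≤ a := Finset.sum_nonneg fun ℓ _ => hp0 ℓ
  have ha1 : a ≤ 1 := by
    rw [← hp1, ha]
    exact Finset.sum_le_sum_of_subset_of_nonneg (Finset.filter_subset _ _) fun ℓ _ _ => hp0 ℓ
  have ha' : ∑ ℓ ∈ T', p ℓ = 1 - a := by
    have := Finset.sum_filter_add_sum_filter_not Finset.univ (fun ℓ => m ≤ v ℓ) p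
    rw [hp1] at this
    rw [hT', ← ha] at *
    linarith [this]
  have hA0 : 0 ≤ A := Finset.sum_nonneg fun ℓ hℓ =>
    mul_nonneg (hp0 ℓ) (sub_nonneg.2 (Finset.mem_filter.1 hℓ).2)
  have hAle : A ≤ a * (C - m) := by
    rw [hA, ha, Finset.sum_mul]
    exact Finset.sum_le_sum fun ℓ _ => mul_le_mul_of_nonneg_left (by linarith [(abs_le.1 (hv ℓ)).2]) (hp0 ℓ)
  have hBle : B ≤ (1 - a) * (C + m) := by
    rw [hB, ← ha', Finset.sum_mul]
    exact Finset.sum_le_sum fun ℓ _ => mul_le_mul_of_nonneg_left (by linarith [(abs_le.1 (hv ℓ)).1]) (hp0 ℓ)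
  rw [hsplit, ← hAB]
  -- now: A + A ≤ C, where A² ≤ a(1-a)(C-m)(C+m) ≤ C²/4
  have hprod : A * A ≤ (a * (C - m)) * ((1 - a) * (C + m)) :=
    mul_le_mul hAle (hAB ▸ hBle) hA0 (mul_nonneg ha0 (by linarith))
  nlinarith [sq_nonneg (2 * a - 1), sq_nonneg m, sq_nonneg (2 * A - C), sq_nonneg (C - m), sq_nonneg (C + m), mul_nonneg ha0 (sub_nonneg.2 ha1)]



lemma softmax_l1 {L : ℕ} (w z : Fin L → ℝ) {C : ℝ} (hC0 : 0 ≤ C)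
    (hC : ∀ ℓ, |w ℓ - z ℓ| ≤ C) :
    ∑ ℓ, |Real.exp (z ℓ) / (∑ j, Real.exp (z j)) -
      Real.exp (w ℓ) / (∑ j, Real.exp (w j))| ≤ C := by
  rcases isEmpty_or_nonempty (Fin L) with h | h
  · simpa using hC0
  set δ : Fin L → ℝ := fun ℓ => w ℓ - z ℓ with hδ
  set S : ℝ → ℝ := fun t => ∑ j, Real.exp (z j + t * δ j) with hS
  have hSpos : ∀ t, 0 < S t := fun t =>
    Finset.sum_pos (fun j _ => Real.exp_pos _) Finset.univ_nonempty
  set g : ℝ → Fin L → ℝ := fun t ℓ => Real.exp (z ℓ + t * δ ℓ) / S t with hg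
  set d : ℝ → Fin L → ℝ := fun t ℓ => g t ℓ * (δ ℓ - ∑ j, g t j * δ j) with hd
  have hgpos : ∀ t ℓ, 0 ≤ g t ℓ := fun t ℓ => div_nonneg (Real.exp_pos _).le (hSpos t).le
  have hgsum : ∀ t, ∑ ℓ, g t ℓ = 1 := by
    intro t
    rw [hg]
    simp only [← Finset.sum_div]
    exact div_self (hSpos t).ne'
  have hderiv : ∀ (t : ℝ) (ℓ : Fin L), HasDerivAt (fun t => g t ℓ) (d t ℓ) t := by
    intro t ℓ
    have hnum : ∀ j, HasDerivAt (fun t : ℝ => Real.exp (z j + t * δ j))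
        (Real.exp (z j + t * δ j) * δ j) t := by
      intro j
      have h1 : HasDerivAt (fun t : ℝ => z j + t * δ j) (δ j) t := by
        simpa using ((hasDerivAt_id t).mul_const (δ j)).const_add (z j)
      simpa [mul_comm] using h1.exp
    have hden : HasDerivAt S (∑ j, Real.exp (z j + t * δ j) * δ j) t := by
      rw [hS]
      exact HasDerivAt.fun_sum (fun j _ => hnum j)
    have h2 := (hnum ℓ).fun_div hden (hSpos t).ne'
    refine h2.congr_deriv (Eq.symm ?_)
    show g t ℓ * (δ ℓ - ∑ j, g t j * δ j) = _
    have hsum : (∑ j, g t j * δ j) = (∑ j, Real.exp (z j + t * δ j) * δ j) / S t := by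
      rw [Finset.sum_div]
      exact Finset.sum_congr rfl fun j _ => (div_mul_eq_mul_div _ _ _)
    rw [hsum]
    simp only [hg]
    have hSt : S t ≠ 0 := (hSpos t).ne'
    field_simp
  set e := PiLp.continuousLinearEquiv 1 ℝ (fun _ : Fin L => ℝ) with he
  set F : ℝ → PiLp 1 (fun _ : Fin L => ℝ) := fun t => e.symm (g t) with hF
  have hFd : ∀ t : ℝ, HasDerivAt F (e.symm (d t)) t := by
    intro t
    exact e.symm.hasFDerivAt.comp_hasDerivAt t (hasDerivAt_pi.2 (hderiv t))
  have hnorm : ∀ x : Fin L → ℝ, ‖e.symm x‖ = ∑ ℓ, |x ℓ| := by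
    intro x
    rw [PiLp.norm_eq_sum (by norm_num : 0 < (1 : ENNReal).toReal)]
    simp [Real.norm_eq_abs, he]
  have hbound : ∀ t ∈ (Set.univ : Set ℝ), ‖e.symm (d t)‖ ≤ C := by
    intro t _
    rw [hnorm]
    have : ∀ ℓ, |d t ℓ| = g t ℓ * |δ ℓ - ∑ j, g t j * δ j| := fun ℓ => by
      rw [hd, abs_mul, abs_of_nonneg (hgpos t ℓ)]
    rw [Finset.sum_congr rfl fun ℓ _ => this ℓ]
    exact weighted_abs_dev_le (g t) δ hC0 (hgpos t) (hgsum t) hC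
  have key : ‖F 0 - F 1‖ ≤ C * ‖(0 : ℝ) - 1‖ :=
    Convex.norm_image_sub_le_of_norm_hasDerivWithin_le
      (f' := fun t => e.symm (d t))
      (fun x _ => (hFd x).hasDerivWithinAt) hbound convex_univ
      (Set.mem_univ 1) (Set.mem_univ 0)
  have h01 : ‖F 0 - F 1‖ = ∑ ℓ, |Real.exp (z ℓ) / (∑ j, Real.exp (z j)) -
      Real.exp (w ℓ) / (∑ j, Real.exp (w j))| := by
    have : F 0 - F 1 = e.symm (fun ℓ => g 0 ℓ - g 1 ℓ) := by
      apply PiLp.ext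
      intro ℓ
      simp [hF, he]
    rw [this, hnorm]
    refine Finset.sum_congr rfl fun ℓ _ => ?_
    have h0 : g 0 ℓ = Real.exp (z ℓ) / (∑ j, Real.exp (z j)) := by simp [hg, hS]
    have h1 : g 1 ℓ = Real.exp (w ℓ) / (∑ j, Real.exp (w j)) := by
      have hzw : ∀ j, z j + 1 * δ j = w j := fun j => by simp [hδ]
      simp only [hg, hS, hzw]
    rw [h0, h1]
  rw [h01] at key
  simpa using key

lemma sq_diff_bound {dp : ℕ} {r s : ℝ} (hconj : Real.HolderConjugate s r) {σ : ℝ}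
    (hσ : (2 * (dp : ℝ)) ^ (1 / s) ≤ σ ^ 2) (A B : Fin dp → ℝ) :
    |∑ i, A i ^ 2 - ∑ i, B i ^ 2| ≤
      σ ^ 2 * lrNorm r (fun i => A i - B i) * (lrNorm r A + lrNorm r B) := by
  have hr1 : 1 ≤ r := (Real.holderConjugate_iff.1 hconj.symm).1.le
  have hr0 : 0 < r := hconj.right_pos
  have hs0 : 0 < s := hconj.left_pos
  have h1 : ∑ i, A i ^ 2 - ∑ i, B i ^ 2 = ∑ i, (A i - B i) * (A i + B i) := by
    rw [← Finset.sum_sub_distrib]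
    exact Finset.sum_congr rfl fun i _ => by ring
  have hsnorm : lrNorm s (fun i => A i - B i) ≤ σ ^ 2 * lrNorm r (fun i => A i - B i) := by
    calc lrNorm s (fun i => A i - B i)
        ≤ (dp : ℝ) ^ (1 / s) * lrNorm r (fun i => A i - B i) := lrNorm_s_le hr0 hs0 _
      _ ≤ σ ^ 2 * lrNorm r (fun i => A i - B i) := by
          apply mul_le_mul_of_nonneg_right _ (lrNorm_nonneg _ _)
          calc (dp : ℝ) ^ (1 / s) ≤ (2 * (dp : ℝ)) ^ (1 / s) :=
                Real.rpow_le_rpow (Nat.cast_nonneg _) (by linarith [Nat.cast_nonneg (α := ℝ) dp]) (by positivity)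
            _ ≤ σ ^ 2 := hσ
  rw [h1]
  calc |∑ i, (A i - B i) * (A i + B i)|
      ≤ lrNorm s (fun i => A i - B i) * lrNorm r (fun i => A i + B i) :=
        abs_sum_mul_le hconj _ _
    _ ≤ (σ ^ 2 * lrNorm r (fun i => A i - B i)) * (lrNorm r A + lrNorm r B) := by
        apply mul_le_mul hsnorm (lrNorm_add_le hr1 A B) (lrNorm_nonneg _ _)
        exact mul_nonneg (by positivity) (lrNorm_nonneg _ _)
    _ = σ ^ 2 * lrNorm r (fun i => A i - B i) * (lrNorm r A + lrNorm r B) := by ring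

/-- Lipschitz continuity, in `ℓ₁`-norm, of the softmax-normalized Gaussian RBF
similarity vector with respect to the keys (a) and the query (b). -/
theorem softmax_rbf_lipschitz
    {L dp : ℕ} (r s σ : ℝ) (hr : 1 < r) (hs : 1 < s) (hrs : 1 / r + 1 / s = 1)
    (hσ : (2 * (dp : ℝ)) ^ (1 / s) ≤ σ ^ 2)
    (q qhat : Fin dp → ℝ) (K Khat : Matrix (Fin L) (Fin dp) ℝ) :
    (∑ ℓ, |smVec σ q K ℓ - smVec σ q Khat ℓ|)
        ≤ (lrNorm r q + max (matNormRInf r Kᵀ) (matNormRInf r Khatᵀ)) *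
            matNormRInf r (Kᵀ - Khatᵀ)
      ∧
    (∑ ℓ, |smVec σ q K ℓ - smVec σ qhat K ℓ|)
        ≤ (max (lrNorm r q) (lrNorm r qhat) + matNormRInf r Kᵀ) *
            lrNorm r (q - qhat) := by
  have hr0 : 0 < r := lt_trans one_pos hr
  have hs0 : 0 < s := lt_trans one_pos hs
  have hconj : Real.HolderConjugate s r := Real.holderConjugate_iff.2 ⟨hs, by
    rw [inv_eq_one_div, inv_eq_one_div]; linarith⟩
  -- bddAbove for iSup manipulation
  have hcol : ∀ (M : Matrix (Fin L) (Fin dp) ℝ) (ℓ : Fin L),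
      lrNorm r (fun i => M ℓ i) ≤ matNormRInf r Mᵀ := by
    intro M ℓ
    have h := le_ciSup (f := fun j : Fin L => lrNorm r (fun i : Fin dp => Mᵀ i j))
      (Set.Finite.bddAbove (Set.finite_range _)) ℓ
    simpa [matNormRInf, Matrix.transpose_apply] using h
  have hmatnn : ∀ {m n : ℕ} (M : Matrix (Fin m) (Fin n) ℝ), 0 ≤ matNormRInf r M :=
    fun M => Real.iSup_nonneg fun j => lrNorm_nonneg r _
  -- σ² positive when dp ≥ 1
  have hσpos : 0 < dp → 0 < σ ^ 2 := by
    intro hdp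
    have h1 : (1 : ℝ) ≤ 2 * (dp : ℝ) := by
      have : (1 : ℝ) ≤ (dp : ℝ) := by exact_mod_cast hdp
      linarith
    have : (1 : ℝ) ≤ (2 * (dp : ℝ)) ^ (1 / s) := by
      calc (1 : ℝ) = 1 ^ (1 / s) := (Real.one_rpow _).symm
        _ ≤ (2 * (dp : ℝ)) ^ (1 / s) := Real.rpow_le_rpow one_pos.le h1 (by positivity)
    linarith
  constructor
  · -- part (a)
    set D := matNormRInf r (Kᵀ - Khatᵀ) with hD
    set M := max (matNormRInf r Kᵀ) (matNormRInf r Khatᵀ) with hM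
    set C := (lrNorm r q + M) * D with hC
    have hC0 : 0 ≤ C := mul_nonneg (add_nonneg (lrNorm_nonneg _ _)
      (le_max_iff.2 (Or.inl (hmatnn _)))) (hmatnn _)
    set z : Fin L → ℝ := fun ℓ => -(∑ i, (q i - K ℓ i) ^ 2) / (2 * σ ^ 2) with hz
    set w : Fin L → ℝ := fun ℓ => -(∑ i, (q i - Khat ℓ i) ^ 2) / (2 * σ ^ 2) with hw
    have hCb : ∀ ℓ, |w ℓ - z ℓ| ≤ C := by
      intro ℓ
      rcases Nat.eq_zero_or_pos dp with hdp | hdp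
      · have : IsEmpty (Fin dp) := by rw [hdp]; infer_instance
        simp only [hz, hw, Finset.univ_eq_empty, Finset.sum_empty, neg_zero, sub_self, abs_zero]
        exact hC0
      · have h2σ : 0 < 2 * σ ^ 2 := by linarith [hσpos hdp]
        have hnum := sq_diff_bound hconj hσ (fun i => q i - K ℓ i) (fun i => q i - Khat ℓ i)
        have hAB : (fun i => (q i - K ℓ i) - (q i - Khat ℓ i)) = fun i => -(K ℓ i - Khat ℓ i) := by
          funext i; ring
        have hd1 : lrNorm r (fun i => (q i - K ℓ i) - (q i - Khat ℓ i)) ≤ D := by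
          rw [hAB, lrNorm_neg]
          have := hcol (K - Khat) ℓ
          simpa using this
        have hq1 : lrNorm r (fun i => q i - K ℓ i) ≤ lrNorm r q + M := by
          calc lrNorm r (fun i => q i - K ℓ i) ≤ lrNorm r q + lrNorm r (K ℓ) :=
                lrNorm_sub_le hr.le q (K ℓ)
            _ ≤ lrNorm r q + M := by
                have := hcol K ℓ
                exact add_le_add_right (le_trans this (le_max_left _ _)) _
        have hq2 : lrNorm r (fun i => q i - Khat ℓ i) ≤ lrNorm r q + M := by
          calc lrNorm r (fun i => q i - Khat ℓ i) ≤ lrNorm r q + lrNorm r (Khat ℓ) :=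
                lrNorm_sub_le hr.le q (Khat ℓ)
            _ ≤ lrNorm r q + M := by
                have := hcol Khat ℓ
                exact add_le_add_right (le_trans this (le_max_right _ _)) _
        have hzw : w ℓ - z ℓ = (∑ i, (q i - K ℓ i) ^ 2 - ∑ i, (q i - Khat ℓ i) ^ 2) / (2 * σ ^ 2) := by
          rw [hz, hw]; ring
        rw [hzw, abs_div, abs_of_pos h2σ, div_le_iff₀ h2σ]
        calc |∑ i, (q i - K ℓ i) ^ 2 - ∑ i, (q i - Khat ℓ i) ^ 2|
            ≤ σ ^ 2 * lrNorm r (fun i => (q i - K ℓ i) - (q i - Khat ℓ i)) *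
              (lrNorm r (fun i => q i - K ℓ i) + lrNorm r (fun i => q i - Khat ℓ i)) := by
              have := sq_diff_bound hconj hσ (fun i => q i - K ℓ i) (fun i => q i - Khat ℓ i)
              simpa [abs_sub_comm] using this
          _ ≤ σ ^ 2 * D * ((lrNorm r q + M) + (lrNorm r q + M)) := by
              apply mul_le_mul
              · exact mul_le_mul_of_nonneg_left hd1 (by positivity)
              · exact add_le_add hq1 hq2
              · exact add_nonneg (lrNorm_nonneg _ _) (lrNorm_nonneg _ _)
              · exact mul_nonneg (by positivity) (hD ▸ hmatnn _)
          _ = C * (2 * σ ^ 2) := by rw [hC]; ring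
    have := softmax_l1 w z hC0 hCb
    calc ∑ ℓ, |smVec σ q K ℓ - smVec σ q Khat ℓ|
        = ∑ ℓ, |Real.exp (z ℓ) / (∑ j, Real.exp (z j)) -
            Real.exp (w ℓ) / (∑ j, Real.exp (w j))| := by
          refine Finset.sum_congr rfl fun ℓ _ => ?_
          simp only [smVec, rbf, hz, hw]
      _ ≤ C := this
  · -- part (b)
    set D := lrNorm r (q - qhat) with hD
    set M := max (lrNorm r q) (lrNorm r qhat) with hM
    set C := (M + matNormRInf r Kᵀ) * D with hC
    have hC0 : 0 ≤ C := mul_nonneg (add_nonneg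
      (le_max_iff.2 (Or.inl (lrNorm_nonneg _ _))) (hmatnn _)) (lrNorm_nonneg _ _)
    set z : Fin L → ℝ := fun ℓ => -(∑ i, (q i - K ℓ i) ^ 2) / (2 * σ ^ 2) with hz
    set w : Fin L → ℝ := fun ℓ => -(∑ i, (qhat i - K ℓ i) ^ 2) / (2 * σ ^ 2) with hw
    have hCb : ∀ ℓ, |w ℓ - z ℓ| ≤ C := by
      intro ℓ
      rcases Nat.eq_zero_or_pos dp with hdp | hdp
      · have : IsEmpty (Fin dp) := by rw [hdp]; infer_instance
        simp only [hz, hw, Finset.univ_eq_empty, Finset.sum_empty, neg_zero, sub_self, abs_zero]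
        exact hC0
      · have h2σ : 0 < 2 * σ ^ 2 := by linarith [hσpos hdp]
        have hAB : (fun i => (q i - K ℓ i) - (qhat i - K ℓ i)) = fun i => (q - qhat) i := by
          funext i; simp [Pi.sub_apply]
        have hd1 : lrNorm r (fun i => (q i - K ℓ i) - (qhat i - K ℓ i)) ≤ D := by
          exact le_of_eq (by rw [hAB])
        have hq1 : lrNorm r (fun i => q i - K ℓ i) ≤ M + matNormRInf r Kᵀ := by
          calc lrNorm r (fun i => q i - K ℓ i) ≤ lrNorm r q + lrNorm r (K ℓ) :=
                lrNorm_sub_le hr.le q (K ℓ)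
            _ ≤ M + matNormRInf r Kᵀ := add_le_add (le_max_left _ _) (hcol K ℓ)
        have hq2 : lrNorm r (fun i => qhat i - K ℓ i) ≤ M + matNormRInf r Kᵀ := by
          calc lrNorm r (fun i => qhat i - K ℓ i) ≤ lrNorm r qhat + lrNorm r (K ℓ) :=
                lrNorm_sub_le hr.le qhat (K ℓ)
            _ ≤ M + matNormRInf r Kᵀ := add_le_add (le_max_right _ _) (hcol K ℓ)
        have hzw : w ℓ - z ℓ = (∑ i, (q i - K ℓ i) ^ 2 - ∑ i, (qhat i - K ℓ i) ^ 2) / (2 * σ ^ 2) := by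
          rw [hz, hw]; ring
        rw [hzw, abs_div, abs_of_pos h2σ, div_le_iff₀ h2σ]
        calc |∑ i, (q i - K ℓ i) ^ 2 - ∑ i, (qhat i - K ℓ i) ^ 2|
            ≤ σ ^ 2 * lrNorm r (fun i => (q i - K ℓ i) - (qhat i - K ℓ i)) *
              (lrNorm r (fun i => q i - K ℓ i) + lrNorm r (fun i => qhat i - K ℓ i)) :=
              sq_diff_bound hconj hσ _ _
          _ ≤ σ ^ 2 * D * ((M + matNormRInf r Kᵀ) + (M + matNormRInf r Kᵀ)) := by
              apply mul_le_mul
              · exact mul_le_mul_of_nonneg_left hd1 (by positivity)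
              · exact add_le_add hq1 hq2
              · exact add_nonneg (lrNorm_nonneg _ _) (lrNorm_nonneg _ _)
              · exact mul_nonneg (by positivity) (hD ▸ lrNorm_nonneg _ _)
          _ = C * (2 * σ ^ 2) := by rw [hC]; ring
    have := softmax_l1 w z hC0 hCb
    calc ∑ ℓ, |smVec σ q K ℓ - smVec σ qhat K ℓ|
        = ∑ ℓ, |Real.exp (z ℓ) / (∑ j, Real.exp (z j)) -
            Real.exp (w ℓ) / (∑ j, Real.exp (w j))| := by
          refine Finset.sum_congr rfl fun ℓ _ => ?_
          simp only [smVec, rbf, hz, hw]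
      _ ≤ C := this
end
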